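/- arXiv:1807.04197 — 3 statements merged into one kernel-verified Lean document; each statement's English description precedes it below -/
import Mathlib

section
/- For any Young diagram ν with at least one box, the sum over all Young diagrams λ obtained from ν by removing one corner box of 1/H_λ equals |ν|/H_ν, where |ν| is the number of boxes of ν and H denotes the product of hook lengths. -/
/-!
Pad `ν` to `R = ν.colLen 0` rows and let `b i = ν.rowLen i + (R - 1 - i)` be its beta numbers.
Frobenius' formula `H_ν * ∏_{i < k < R} (b i - b k) = ∏_{i < R} (b i)!` shows that removing the
corner at the end of row `a`, which replaces `b a` by `b a - 1`, multiplies `1 / H_ν` by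
`w a = b a * ∏_{i ≠ a} (b a - 1 - b i) / (b a - b i)`. On a row without a corner `w a = 0`, since
then `b a - 1` is again a beta number or `b a = 0`. Summing over all rows, Lagrange interpolation
gives `∑_a w a = ∑_a b a - R.choose 2 = |ν|`.
-/

open Finset

/-- The content of a box with (0-indexed) row `c.1` and column `c.2`. -/
def boxContent (c : ℕ × ℕ) : ℤ := (c.2 : ℤ) - (c.1 : ℤ)

/-- The hook length of a box `c` in a diagram with set of boxes `s`:
arm length plus leg length plus one. -/
def hook (s : Finset (ℕ × ℕ)) (c : ℕ × ℕ) : ℕ :=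
  (s.filter fun d => d.1 = c.1 ∧ c.2 < d.2).card +
  (s.filter fun d => d.2 = c.2 ∧ c.1 < d.1).card + 1

/-- The product of all hook lengths. -/
def Hprod (s : Finset (ℕ × ℕ)) : ℕ := ∏ c ∈ s, hook s c

/-- The removable corner boxes of a diagram with boxes `s`. -/
def corners (s : Finset (ℕ × ℕ)) : Finset (ℕ × ℕ) :=
  s.filter fun c => (c.1 + 1, c.2) ∉ s ∧ (c.1, c.2 + 1) ∉ s

open Polynomial Lagrange
open scoped Nat

section
variable {M : Type*} [CommMonoid M]

theorem prod_range_eq_mul_mul (f : ℕ → M) {a n : ℕ} (ha : a < n) :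
    ∏ i ∈ range n, f i = (∏ i ∈ range a, f i) * f a * ∏ i ∈ Ioo a n, f i := by
  rw [← Finset.Ico_add_one_left_eq_Ioo, ← prod_range_succ]
  exact (prod_range_mul_prod_Ico f ha).symm

theorem prod_range_erase_eq_mul (f : ℕ → M) {a n : ℕ} (ha : a < n) :
    ∏ i ∈ (range n).erase a, f i = (∏ i ∈ range a, f i) * ∏ i ∈ Ioo a n, f i := by
  have h : (range n).erase a = range a ∪ Ioo a n := by
    ext i
    simp only [mem_erase, mem_range, mem_union, mem_Ioo]
    omega
  refine h ▸ prod_union (disjoint_left.2 fun i hi hi' => ?_)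
  simp only [mem_range, mem_Ioo] at hi hi'
  omega
end

theorem prod_factorial_eq_mul_prod_factorial_update {s : Finset ℕ} {f : ℕ → ℕ} {a : ℕ}
    (ha : a ∈ s) (hfa : 0 < f a) :
    ∏ i ∈ s, (f i)! = f a * ∏ i ∈ s, (Function.update f a (f a - 1) i)! := by
  have hrest : ∏ i ∈ s.erase a, (Function.update f a (f a - 1) i)! = ∏ i ∈ s.erase a, (f i)! :=
    prod_congr rfl fun i hi => by rw [Function.update_of_ne (ne_of_mem_erase hi)]
  rw [← mul_prod_erase s _ ha, ← mul_prod_erase s _ ha, Function.update_self, hrest, ← mul_assoc,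
    Nat.mul_factorial_pred hfa.ne']

theorem prod_mul_prod_eq_factorial {α β : Type*} {s : Finset α} {t : Finset β} {f : α → ℕ}
    {g : β → ℕ} {n : ℕ} (hf : Set.InjOn f s) (hg : Set.InjOn g t)
    (hfn : ∀ x ∈ s, f x ∈ Icc 1 n) (hgn : ∀ y ∈ t, g y ∈ Icc 1 n)
    (hfg : ∀ x ∈ s, ∀ y ∈ t, f x ≠ g y) (hcard : #s + #t = n) :
    (∏ x ∈ s, f x) * ∏ y ∈ t, g y = n ! := by
  have hdisj : Disjoint (s.image f) (t.image g) := by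
    simp only [disjoint_left, mem_image]
    rintro _ ⟨x, hx, rfl⟩ ⟨y, hy, hxy⟩
    exact hfg x hx y hy hxy.symm
  have hunion : s.image f ∪ t.image g = Icc 1 n := by
    refine eq_of_subset_of_card_le (union_subset (image_subset_iff.2 hfn)
      (image_subset_iff.2 hgn)) ?_
    rw [card_union_of_disjoint hdisj, card_image_of_injOn hf, card_image_of_injOn hg,
      Nat.card_Icc]
    omega
  rw [← prod_image (f := fun x => x) hf, ← prod_image (f := fun x => x) hg, ← prod_union hdisj,
    hunion, ← Finset.Ico_add_one_right_eq_Icc, prod_Ico_id_eq_factorial]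

section
variable {R : Type*} [CommRing R] {ι : Type*}

-- The factor `X ^ 2` keeps the indices `#s - 1`, `#s - 2` of the top coefficients of `nodal s v`
-- from being truncated in `ℕ` when `#s < 2`.
theorem coeff_X_sq_mul_nodal_of_ge (s : Finset ι) (v : ι → R) {k : ℕ} (hk : #s + 2 ≤ k) :
    (X ^ 2 * nodal s v).coeff k = if k = #s + 2 then 1 else 0 := by
  nontriviality R
  rw [coeff_X_pow_mul', if_pos (by omega)]
  split_ifs with h
  · rw [h, Nat.add_sub_cancel, ← natDegree_nodal (v := v)]
    exact nodal_monic.coeff_natDegree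
  · exact coeff_eq_zero_of_natDegree_lt (by rw [natDegree_nodal]; omega)

theorem coeff_X_sq_mul_nodal [DecidableEq ι] (s : Finset ι) (v : ι → R) :
    (X ^ 2 * nodal s v).coeff (#s + 1) = -∑ i ∈ s, v i ∧
      2 * (X ^ 2 * nodal s v).coeff #s = (∑ i ∈ s, v i) ^ 2 - ∑ i ∈ s, v i ^ 2 := by
  induction s using Finset.induction_on with
  | empty => simp [nodal_empty]
  | @insert a s ha ih =>
    have hstep (k : ℕ) : (X ^ 2 * nodal (insert a s) v).coeff (k + 1) =
        (X ^ 2 * nodal s v).coeff k - v a * (X ^ 2 * nodal s v).coeff (k + 1) := by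
      rw [nodal_insert_eq_nodal ha, mul_left_comm, sub_mul, coeff_sub, coeff_X_mul, coeff_C_mul]
    have htop := coeff_X_sq_mul_nodal_of_ge s v le_rfl
    rw [if_pos rfl] at htop
    rw [card_insert_of_notMem ha, sum_insert ha, sum_insert ha, hstep, hstep, htop, ih.1]
    exact ⟨by ring, by linear_combination ih.2⟩
end

section
variable {K : Type*} [Field K] [CharZero K] {ι : Type*} [DecidableEq ι]

theorem sum_mul_prod_sub_one_div_sub {s : Finset ι} {v : ι → K} (hv : Set.InjOn v s) :
    ∑ i ∈ s, v i * ∏ j ∈ s.erase i, (v i - 1 - v j) / (v i - v j) =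
      ∑ i ∈ s, v i - ((#s).choose 2 : K) := by
  obtain rfl | hs := s.eq_empty_or_nonempty
  · simp
  set N := nodal s v
  set A := nodal s (fun i => v i + 1)
  -- `P ≡ X * A (mod N)`, the multiple of `N` being chosen so that `P.degree < #s`
  set P := X * A - (X - C (#s : K)) * N
  have hP (m : ℕ) : P.coeff m = (X ^ 2 * A).coeff (m + 1) - (X ^ 2 * N).coeff (m + 1) +
      #s * (X ^ 2 * N).coeff (m + 2) := by
    rw [← coeff_X_pow_mul P 2 m,
      show X ^ 2 * P = X * (X ^ 2 * A) - X * (X ^ 2 * N) + C (#s : K) * (X ^ 2 * N) by ring,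
      coeff_add, coeff_sub, coeff_X_mul, coeff_X_mul, coeff_C_mul]
  obtain ⟨hN1, hN2⟩ := coeff_X_sq_mul_nodal s v
  obtain ⟨hA1, hA2⟩ := coeff_X_sq_mul_nodal s (fun i => v i + 1)
  have hsum : ∑ i ∈ s, (v i + 1) = ∑ i ∈ s, v i + #s := by simp [sum_add_distrib]
  have hdeg : P.degree < #s := by
    refine degree_lt_iff_coeff_zero _ _ |>.2 fun m hm => ?_
    rw [hP]
    obtain rfl | hm := (show #s ≤ m by exact_mod_cast hm).eq_or_lt
    · rw [hA1, hN1, coeff_X_sq_mul_nodal_of_ge s v le_rfl, if_pos rfl, hsum]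
      ring
    · rw [coeff_X_sq_mul_nodal_of_ge s _ (by omega), coeff_X_sq_mul_nodal_of_ge s v (by omega),
        coeff_X_sq_mul_nodal_of_ge s v (by omega), if_neg (show m + 2 ≠ #s + 2 by omega),
        sub_self, mul_zero, add_zero]
  have heval : ∀ i ∈ s, v i * ∏ j ∈ s.erase i, (v i - 1 - v j) / (v i - v j) =
      -(P.eval (v i) / ∏ j ∈ s.erase i, (v i - v j)) := by
    intro i hi
    have hN : N.eval (v i) = 0 := eval_nodal_at_node hi
    have hA : A.eval (v i) = -∏ j ∈ s.erase i, (v i - 1 - v j) := by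
      rw [eval_nodal, ← mul_prod_erase _ _ hi, sub_add_cancel_left, neg_one_mul]
      exact congrArg _ (prod_congr rfl fun j _ => by ring)
    simp only [P, eval_sub, eval_mul, eval_X, hN, hA, prod_div_distrib]
    ring
  have hpos := hs.card_pos
  rw [sum_congr rfl heval, sum_neg_distrib, ← Lagrange.coeff_eq_sum hv hdeg, hP,
    Nat.sub_add_cancel hpos, show #s - 1 + 2 = #s + 1 by omega, hN1, Nat.cast_choose_two]
  have hsq : ∑ i ∈ s, (v i + 1) ^ 2 = ∑ i ∈ s, v i ^ 2 + 2 * ∑ i ∈ s, v i + #s := by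
    simp [add_sq, sum_add_distrib, mul_sum]
  rw [hsum, hsq] at hA2
  linear_combination (1 / 2 : K) * (hN2 - hA2)
end

section
variable {K : Type*} [CommRing K]

def diffProd (n : ℕ) (b : ℕ → K) : K := ∏ i ∈ range n, ∏ k ∈ Ioo i n, (b i - b k)

theorem diffProd_update_sub_one_mul (b : ℕ → K) {a n : ℕ} (ha : a < n) :
    diffProd n (Function.update b a (b a - 1)) * ∏ i ∈ (range n).erase a, (b a - b i) =
      diffProd n b * ∏ i ∈ (range n).erase a, (b a - 1 - b i) := by
  set b' := Function.update b a (b a - 1)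
  have hb' : ∀ i ≠ a, b' i = b i := fun i hi => Function.update_of_ne hi _ _
  have hba : b' a = b a - 1 := Function.update_self _ _ _
  have hlt (i : ℕ) (hi : i < a) :
      (∏ k ∈ Ioo i n, (b' i - b' k)) * (b a - b i) =
        (∏ k ∈ Ioo i n, (b i - b k)) * (b a - 1 - b i) := by
    have hai : a ∈ Ioo i n := mem_Ioo.2 ⟨hi, ha⟩
    rw [← mul_prod_erase _ _ hai, ← mul_prod_erase _ _ hai, hb' i hi.ne, hba,
      prod_congr rfl fun k hk => by rw [hb' k (ne_of_mem_erase hk)]]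
    ring
  have hgt : ∀ i ∈ Ioo a n, ∏ k ∈ Ioo i n, (b' i - b' k) = ∏ k ∈ Ioo i n, (b i - b k) :=
    fun i hi => prod_congr rfl fun k hk => by
      rw [hb' i (mem_Ioo.1 hi).1.ne', hb' k ((mem_Ioo.1 hi).1.trans (mem_Ioo.1 hk).1).ne']
  have heq : ∏ k ∈ Ioo a n, (b' a - b' k) = ∏ k ∈ Ioo a n, (b a - 1 - b k) :=
    prod_congr rfl fun k hk => by rw [hba, hb' k (mem_Ioo.1 hk).1.ne']
  have hrange := prod_congr rfl fun i hi => hlt i (mem_range.1 hi)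
  rw [prod_mul_distrib, prod_mul_distrib] at hrange
  rw [diffProd, diffProd, prod_range_eq_mul_mul _ ha, prod_range_eq_mul_mul _ ha,
    prod_range_erase_eq_mul _ ha, prod_range_erase_eq_mul _ ha, prod_congr rfl hgt, heq]
  linear_combination (∏ i ∈ Ioo a n, ∏ k ∈ Ioo i n, (b i - b k)) *
    (∏ k ∈ Ioo a n, (b a - 1 - b k)) * (∏ k ∈ Ioo a n, (b a - b k)) * hrange
end

theorem diffProd_ne_zero {K : Type*} [CommRing K] [IsDomain K] {n : ℕ} {b : ℕ → K}
    (hb : Set.InjOn b (range n)) : diffProd n b ≠ 0 :=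
  prod_ne_zero_iff.2 fun _ hi => prod_ne_zero_iff.2 fun _ hk => sub_ne_zero.2 <|
    hb.ne hi (mem_range.2 (mem_Ioo.1 hk).2) (mem_Ioo.1 hk).1.ne

theorem Hprod_pos (s : Finset (ℕ × ℕ)) : 0 < Hprod s :=
  prod_pos fun _ _ => Nat.succ_pos _

namespace YoungDiagram

/-- Meaningful for `i < R`. For `R = μ.colLen 0` these are the hook lengths of the first column. -/
def betaNumber (μ : YoungDiagram) (R i : ℕ) : ℕ := μ.rowLen i + (R - 1 - i)

theorem rowLen_pos_iff (μ : YoungDiagram) {i : ℕ} : 0 < μ.rowLen i ↔ i < μ.colLen 0 := by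
  rw [← mem_iff_lt_rowLen, mem_iff_lt_colLen]

theorem mem_cells_iff_of_colLen_le (μ : YoungDiagram) {R : ℕ} (hR : μ.colLen 0 ≤ R)
    (c : ℕ × ℕ) : c ∈ μ.cells ↔ c.1 ∈ range R ∧ c.2 ∈ range (μ.rowLen c.1) := by
  rw [mem_cells, mem_range, mem_range, ← mem_iff_lt_rowLen]
  refine ⟨fun h => ⟨?_, h⟩, And.right⟩
  have := μ.rowLen_pos_iff.1 (mem_iff_lt_rowLen.1 (μ.up_left_mem le_rfl (Nat.zero_le c.2) h))
  omega

theorem card_cells_eq_sum_rowLen (μ : YoungDiagram) {R : ℕ} (hR : μ.colLen 0 ≤ R) :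
    #μ.cells = ∑ i ∈ range R, μ.rowLen i := by
  rw [card_eq_sum_ones, sum_finset_product _ (range R) (fun i => range (μ.rowLen i))
    (μ.mem_cells_iff_of_colLen_le hR)]
  simp

theorem Hprod_eq_prod_rowLen (μ : YoungDiagram) {R : ℕ} (hR : μ.colLen 0 ≤ R) :
    Hprod μ.cells = ∏ i ∈ range R, ∏ j ∈ range (μ.rowLen i), hook μ.cells (i, j) :=
  prod_finset_product _ _ _ (μ.mem_cells_iff_of_colLen_le hR)

theorem hook_add_add_add_one (μ : YoungDiagram) {i j : ℕ} (h : (i, j) ∈ μ) :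
    hook μ.cells (i, j) + i + j + 1 = μ.rowLen i + μ.colLen j := by
  have harm : μ.cells.filter (fun d => d.1 = i ∧ j < d.2) = {i} ×ˢ Ioo j (μ.rowLen i) := by
    ext ⟨a, b⟩
    simp only [mem_filter, mem_cells, mem_product, mem_singleton, mem_Ioo, mem_iff_lt_rowLen]
    constructor
    · rintro ⟨hb, rfl, hjb⟩
      exact ⟨rfl, hjb, hb⟩
    · rintro ⟨rfl, hjb, hb⟩
      exact ⟨hb, rfl, hjb⟩
  have hleg : μ.cells.filter (fun d => d.2 = j ∧ i < d.1) = Ioo i (μ.colLen j) ×ˢ {j} := by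
    ext ⟨a, b⟩
    simp only [mem_filter, mem_cells, mem_product, mem_singleton, mem_Ioo, mem_iff_lt_colLen]
    constructor
    · rintro ⟨ha, rfl, hia⟩
      exact ⟨⟨hia, ha⟩, rfl⟩
    · rintro ⟨⟨hia, ha⟩, rfl⟩
      exact ⟨ha, rfl, hia⟩
  have hj := mem_iff_lt_rowLen.1 h
  have hi := mem_iff_lt_colLen.1 h
  rw [hook, harm, hleg, card_product, card_product, card_singleton, card_singleton,
    Nat.card_Ioo, Nat.card_Ioo]
  omega

theorem betaNumber_strictAntiOn (μ : YoungDiagram) (R : ℕ) :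
    StrictAntiOn (μ.betaNumber R) (Set.Iio R) := by
  intro i _ k hk hik
  have := μ.rowLen_anti i k hik.le
  have : k < R := hk
  unfold betaNumber
  omega

theorem injOn_cast_betaNumber (μ : YoungDiagram) (R : ℕ) :
    Set.InjOn (fun i => (μ.betaNumber R i : ℚ)) (range R) := by
  rw [coe_range]
  exact Nat.cast_injective.comp_injOn (μ.betaNumber_strictAntiOn R).injOn

-- The hooks of row `i` and the gaps `b i - b k`, `i < k < R`, are exactly `1, …, b i`.
theorem prod_hook_mul_prod_betaNumber_sub (μ : YoungDiagram) {R i : ℕ} (hR : μ.colLen 0 ≤ R)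
    (hi : i < R) :
    (∏ j ∈ range (μ.rowLen i), hook μ.cells (i, j)) *
      ∏ k ∈ Ioo i R, (μ.betaNumber R i - μ.betaNumber R k) = (μ.betaNumber R i)! := by
  have hcol (j : ℕ) : μ.colLen j ≤ R := (μ.colLen_anti 0 j j.zero_le).trans hR
  have hhook (j : ℕ) (hj : j ∈ range (μ.rowLen i)) :
      hook μ.cells (i, j) + i + j + 1 = μ.rowLen i + μ.colLen j :=
    μ.hook_add_add_add_one (mem_iff_lt_rowLen.2 (mem_range.1 hj))
  refine prod_mul_prod_eq_factorial ?_ ?_ ?_ ?_ ?_ ?_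
  · intro j₁ h₁ j₂ h₂ heq
    dsimp only at heq
    have := hhook j₁ h₁
    have := hhook j₂ h₂
    rcases le_total j₁ j₂ with h | h
    · have := μ.colLen_anti j₁ j₂ h
      omega
    · have := μ.colLen_anti j₂ j₁ h
      omega
  · intro k₁ h₁ k₂ h₂ heq
    have h₁ := mem_Ioo.1 (mem_coe.1 h₁)
    have h₂ := mem_Ioo.1 (mem_coe.1 h₂)
    have := μ.betaNumber_strictAntiOn R hi h₁.2 h₁.1
    have := μ.betaNumber_strictAntiOn R hi h₂.2 h₂.1
    exact (μ.betaNumber_strictAntiOn R).injOn h₁.2 h₂.2 (by dsimp only at heq; omega)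
  · intro j hj
    have := hhook j hj
    have := hcol j
    have : 1 ≤ hook μ.cells (i, j) := Nat.le_add_left 1 _
    rw [mem_Icc, betaNumber]
    omega
  · intro k hk
    have := μ.betaNumber_strictAntiOn R hi (mem_Ioo.1 hk).2 (mem_Ioo.1 hk).1
    rw [mem_Icc]
    omega
  · intro j hj k hk
    have hik := mem_Ioo.1 hk
    have := hhook j hj
    have := μ.rowLen_anti i k hik.1.le
    have : j < μ.rowLen k ↔ k < μ.colLen j := by rw [← mem_iff_lt_rowLen, mem_iff_lt_colLen]
    simp only [betaNumber]
    omega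
  · simp only [card_range, Nat.card_Ioo, betaNumber]
    omega

theorem Hprod_mul_diffProd (μ : YoungDiagram) {R : ℕ} (hR : μ.colLen 0 ≤ R) :
    (Hprod μ.cells : ℚ) * diffProd R (fun i => (μ.betaNumber R i : ℚ)) =
      ∏ i ∈ range R, ((μ.betaNumber R i)! : ℚ) := by
  rw [μ.Hprod_eq_prod_rowLen hR, diffProd, Nat.cast_prod, ← prod_mul_distrib]
  refine prod_congr rfl fun i hi => ?_
  rw [← μ.prod_hook_mul_prod_betaNumber_sub hR (mem_range.1 hi), Nat.cast_mul, Nat.cast_prod,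
    Nat.cast_prod]
  exact congrArg _ (prod_congr rfl fun k hk =>
    (Nat.cast_sub (μ.betaNumber_strictAntiOn R (mem_range.1 hi) (mem_Ioo.1 hk).2
      (mem_Ioo.1 hk).1).le).symm)

theorem sum_betaNumber (μ : YoungDiagram) {R : ℕ} (hR : μ.colLen 0 ≤ R) :
    ∑ i ∈ range R, μ.betaNumber R i = #μ.cells + R.choose 2 := by
  rw [μ.card_cells_eq_sum_rowLen hR, Nat.choose_two_right, ← sum_range_id,
    ← sum_range_reflect (fun i => i) R]
  exact sum_add_distrib

theorem colLen_mono {μ ν : YoungDiagram} (h : μ ≤ ν) (j : ℕ) : μ.colLen j ≤ ν.colLen j := by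
  by_contra hlt
  exact lt_irrefl _ (mem_iff_lt_colLen.1 (h (mem_iff_lt_colLen.2 (not_le.1 hlt))))

theorem rowLen_eq_of_forall_mem_iff {μ : YoungDiagram} {i m : ℕ}
    (h : ∀ j, (i, j) ∈ μ ↔ j < m) : μ.rowLen i = m :=
  eq_of_forall_lt_iff fun j => by rw [← mem_iff_lt_rowLen, h]

theorem mem_corners_iff (μ : YoungDiagram) {c : ℕ × ℕ} :
    c ∈ corners μ.cells ↔ c.2 + 1 = μ.rowLen c.1 ∧ μ.rowLen (c.1 + 1) ≤ c.2 := by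
  obtain ⟨i, j⟩ := c
  simp only [corners, mem_filter, mem_cells, mem_iff_lt_rowLen]
  omega

theorem fst_mem_range_of_mem_corners (μ : YoungDiagram) {R : ℕ} (hR : μ.colLen 0 ≤ R)
    {c : ℕ × ℕ} (hc : c ∈ corners μ.cells) : c.1 ∈ range R :=
  ((μ.mem_cells_iff_of_colLen_le hR c).1 (mem_of_mem_filter c hc)).1

theorem betaNumber_pos_of_mem_corners (μ : YoungDiagram) (R : ℕ) {c : ℕ × ℕ}
    (hc : c ∈ corners μ.cells) : 0 < μ.betaNumber R c.1 := by
  have := (μ.mem_corners_iff.1 hc).1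
  unfold betaNumber
  omega

theorem isLowerSet_erase_corner (μ : YoungDiagram) {c : ℕ × ℕ} (hc : c ∈ corners μ.cells) :
    IsLowerSet (μ.cells.erase c : Set (ℕ × ℕ)) := by
  rintro ⟨i, j⟩ ⟨i', j'⟩ ⟨hi, hj⟩ hx
  simp only [coe_erase, Set.mem_sdiff, mem_coe, mem_cells, Set.mem_singleton_iff] at hx ⊢
  refine ⟨μ.up_left_mem hi hj hx.1, ?_⟩
  rintro rfl
  have hcorner := μ.mem_corners_iff.1 hc
  have hrow := mem_iff_lt_rowLen.1 hx.1
  rcases hi.eq_or_lt with rfl | hlt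
  · exact hx.2 (Prod.ext rfl (by simp only at hcorner hrow hj ⊢; omega))
  · have := μ.rowLen_anti (i' + 1) i hlt
    simp only at hcorner hrow hj
    omega

def eraseCorner (μ : YoungDiagram) (c : ℕ × ℕ) (hc : c ∈ corners μ.cells) : YoungDiagram where
  cells := μ.cells.erase c
  isLowerSet := μ.isLowerSet_erase_corner hc

theorem mem_eraseCorner {μ : YoungDiagram} {c : ℕ × ℕ} (hc : c ∈ corners μ.cells)
    {x : ℕ × ℕ} : x ∈ μ.eraseCorner c hc ↔ x ∈ μ ∧ x ≠ c := by
  rw [← mem_cells, eraseCorner, mem_erase, mem_cells, and_comm]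

theorem rowLen_eraseCorner {μ : YoungDiagram} {c : ℕ × ℕ} (hc : c ∈ corners μ.cells) :
    (μ.eraseCorner c hc).rowLen = Function.update μ.rowLen c.1 c.2 := by
  funext i
  apply rowLen_eq_of_forall_mem_iff fun j => ?_
  have hcorner := μ.mem_corners_iff.1 hc
  rw [mem_eraseCorner, mem_iff_lt_rowLen, Function.update_apply]
  split_ifs with h
  · subst h
    simp only [Ne, Prod.ext_iff, true_and]
    omega
  · simp [Prod.ext_iff, h]

theorem betaNumber_eraseCorner {μ : YoungDiagram} {c : ℕ × ℕ} (hc : c ∈ corners μ.cells)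
    (R : ℕ) : (μ.eraseCorner c hc).betaNumber R =
      Function.update (μ.betaNumber R) c.1 (μ.betaNumber R c.1 - 1) := by
  funext i
  have hcorner := μ.mem_corners_iff.1 hc
  simp only [betaNumber, rowLen_eraseCorner, Function.update_apply]
  split_ifs with h
  · subst h
    omega
  · rfl

theorem cast_betaNumber_eraseCorner {μ : YoungDiagram} {c : ℕ × ℕ} (hc : c ∈ corners μ.cells)
    (R : ℕ) : (fun i => ((μ.eraseCorner c hc).betaNumber R i : ℚ)) =
      Function.update (fun i => (μ.betaNumber R i : ℚ)) c.1 (μ.betaNumber R c.1 - 1) := by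
  funext i
  rw [betaNumber_eraseCorner hc]
  rcases eq_or_ne i c.1 with rfl | h
  · simp [Nat.cast_sub (μ.betaNumber_pos_of_mem_corners R hc)]
  · simp [h]

theorem one_div_Hprod_erase_corner (μ : YoungDiagram) {R : ℕ} (hR : μ.colLen 0 ≤ R)
    {c : ℕ × ℕ} (hc : c ∈ corners μ.cells) :
    (1 : ℚ) / Hprod (μ.cells.erase c) =
      (μ.betaNumber R c.1 * ∏ i ∈ (range R).erase c.1,
        ((μ.betaNumber R c.1 - 1 - μ.betaNumber R i : ℚ) /
          (μ.betaNumber R c.1 - μ.betaNumber R i : ℚ))) / Hprod μ.cells := by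
  have ha := μ.fst_mem_range_of_mem_corners hR hc
  have hba := μ.betaNumber_pos_of_mem_corners R hc
  change (1 : ℚ) / Hprod (μ.eraseCorner c hc).cells = _
  set μ' := μ.eraseCorner c hc
  set b : ℕ → ℚ := fun i => μ.betaNumber R i
  have hinj := μ.injOn_cast_betaNumber R
  have hH := μ.Hprod_mul_diffProd hR
  have hH' := μ'.Hprod_mul_diffProd
    ((colLen_mono (cells_subset_iff.1 (erase_subset _ _)) 0).trans hR)
  have hF : ∏ i ∈ range R, ((μ.betaNumber R i)! : ℚ) =
      b c.1 * ∏ i ∈ range R, ((μ'.betaNumber R i)! : ℚ) := by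
    rw [betaNumber_eraseCorner hc]
    dsimp only [b]
    exact_mod_cast prod_factorial_eq_mul_prod_factorial_update ha hba
  have hD := diffProd_update_sub_one_mul b (mem_range.1 ha)
  rw [← cast_betaNumber_eraseCorner hc] at hD
  have hD0 := diffProd_ne_zero hinj
  have hP0 : ∏ i ∈ (range R).erase c.1, (b c.1 - b i) ≠ 0 :=
    prod_ne_zero_iff.2 fun i hi => sub_ne_zero.2 <|
      hinj.ne ha (mem_of_mem_erase hi) (ne_of_mem_erase hi).symm
  rw [prod_div_distrib, div_eq_div_iff (Nat.cast_ne_zero.2 (Hprod_pos _).ne')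
    (Nat.cast_ne_zero.2 (Hprod_pos _).ne'), one_mul, ← mul_div_assoc, div_mul_eq_mul_div,
    eq_div_iff hP0]
  apply mul_left_cancel₀ hD0
  linear_combination (∏ i ∈ (range R).erase c.1, (b c.1 - b i)) * (hH + hF) -
    b c.1 * (∏ i ∈ (range R).erase c.1, (b c.1 - b i)) * hH' + b c.1 * Hprod μ'.cells * hD

theorem betaNumber_eq_zero_or_succ_eq (μ : YoungDiagram) {R a : ℕ} (hR : μ.colLen 0 ≤ R)
    (ha : a < R) (hc : (a, μ.rowLen a - 1) ∉ corners μ.cells) :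
    μ.betaNumber R a = 0 ∨ a + 1 < R ∧ μ.betaNumber R (a + 1) + 1 = μ.betaNumber R a := by
  rw [mem_corners_iff] at hc
  dsimp only at hc
  have := μ.rowLen_anti a (a + 1) a.le_succ
  have : μ.rowLen R = 0 := Nat.eq_zero_of_not_pos fun h => by
    have := μ.rowLen_pos_iff.1 h
    omega
  simp only [betaNumber]
  rcases (show a + 1 < R ∨ a + 1 = R by omega) with h | rfl <;> omega

theorem sum_corners_eq_sum_range {M : Type*} [AddCommMonoid M] (μ : YoungDiagram) {R : ℕ}
    (hR : μ.colLen 0 ≤ R) (f : ℕ → M)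
    (hf : ∀ a < R, (a, μ.rowLen a - 1) ∉ corners μ.cells → f a = 0) :
    ∑ c ∈ corners μ.cells, f c.1 = ∑ a ∈ range R, f a := by
  have hinj : Set.InjOn Prod.fst (corners μ.cells : Set (ℕ × ℕ)) := fun c hc c' hc' h => by
    have := (μ.mem_corners_iff.1 hc).1
    have := (μ.mem_corners_iff.1 hc').1
    exact Prod.ext h (by rw [h] at *; omega)
  rw [← sum_image hinj]
  refine sum_subset (fun a ha => ?_) fun a ha hna => hf a (mem_range.1 ha) fun hc => ?_
  · obtain ⟨c, hc, rfl⟩ := mem_image.1 ha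
    exact μ.fst_mem_range_of_mem_corners hR hc
  · exact hna (mem_image.2 ⟨_, hc, rfl⟩)

end YoungDiagram

theorem sum_inv_hook_prod_corners_general (ν : YoungDiagram) :
    ∑ c ∈ corners ν.cells, (1 : ℚ) / Hprod (ν.cells.erase c)
      = (ν.cells.card : ℚ) / Hprod ν.cells := by
  set R := ν.colLen 0
  have hR : ν.colLen 0 ≤ R := le_rfl
  set b : ℕ → ℚ := fun i => ν.betaNumber R i
  set w : ℕ → ℚ := fun a => b a * ∏ i ∈ (range R).erase a, (b a - 1 - b i) / (b a - b i)
  have hw : ∀ a < R, (a, ν.rowLen a - 1) ∉ corners ν.cells → w a = 0 := fun a ha hc => by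
    rcases ν.betaNumber_eq_zero_or_succ_eq hR ha hc with h | ⟨ha1, h⟩
    · simp [w, b, h]
    · refine mul_eq_zero_of_right _ (prod_eq_zero (i := a + 1) ?_ ?_)
      · exact mem_erase.2 ⟨by omega, mem_range.2 ha1⟩
      · simp [b, ← h]
  have hsum : ∑ a ∈ range R, b a = #ν.cells + (R.choose 2 : ℚ) := by
    simp only [b]
    exact_mod_cast ν.sum_betaNumber hR
  calc ∑ c ∈ corners ν.cells, (1 : ℚ) / Hprod (ν.cells.erase c)
      = ∑ c ∈ corners ν.cells, w c.1 / Hprod ν.cells :=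
        sum_congr rfl fun c hc => ν.one_div_Hprod_erase_corner hR hc
    _ = (∑ a ∈ range R, w a) / Hprod ν.cells := by
        rw [ν.sum_corners_eq_sum_range hR (fun a => w a / Hprod ν.cells)
          fun a ha hc => by rw [hw a ha hc, zero_div], sum_div]
    _ = (ν.cells.card : ℚ) / Hprod ν.cells := by
        rw [sum_mul_prod_sub_one_div_sub (ν.injOn_cast_betaNumber R), card_range, hsum,
          add_sub_cancel_right]

/-- Branching-rule identity: `∑_{λ ∈ ν∖1} 1/H_λ = |ν|/H_ν`. -/
theorem sum_inv_hook_prod_corners (ν : YoungDiagram) (h : ν.cells.Nonempty) :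
    ∑ c ∈ corners ν.cells, (1 : ℚ) / Hprod (ν.cells.erase c)
      = (ν.cells.card : ℚ) / Hprod ν.cells :=
  sum_inv_hook_prod_corners_general ν
end

section
/- For any Young diagram ν with at least one box, |ν| · ∑_{λ ∈ ν∖1} (dim λ) · cr(□_{ν/λ}) = 2 · (dim ν) · ∑_{□∈ν} cr(□), where dim denotes the number of standard Young tableaux of the given shape. -/
open Finset

/-- The number of standard Young tableaux of a given shape, defined by the
branching recursion: remove the box containing the largest entry, which must be a
removable corner. -/
def dimSYT (s : Finset (ℕ × ℕ)) : ℕ :=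
  if h : s = ∅ then 1
  else ∑ c ∈ (corners s).attach, dimSYT (s.erase c.1)
termination_by s.card
decreasing_by
  exact Finset.card_erase_lt_of_mem (Finset.mem_of_mem_filter _ c.2)

/-!
Write `d(s)` for `dimSYT s`, `cr` for the content and `n = |s|`. The left-hand side is `n f(s)`
with `f(s) = ∑_c d(s∖c) cr(c)` over the corners `c` of `s`: the trace of the Jucys–Murphy element
`X_n` on `V^s`. Its companion is `χ(s) = ∑_c ∑_x d(s∖c∖x) (cr(c) - cr(x))`, where `x` runs over the
cells that become corners once `c` is removed; such an `x` is covered by `c`, so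
`cr(c) - cr(x) = ±1`, and in Young's seminormal form `χ(s)` is the trace of the transposition
`(n-1 n)`.

Expanding `d(s∖c)` by the branching rule gives `f(s) = χ(s) + ∑_c f(s∖c)`: the terms for two
corners of `s` itself cancel in pairs. Expanding once more gives the branching rule
`χ(s) = ∑_c χ(s∖c)` for `n ≥ 3`: after matching the three-step removals on both sides, what is left
cancels because two cells covered by a common cell (or covering a common cell) have contents adding
up to twice its content. By induction `f(s) = (n-1) χ(s)`, and combining this with
`f(s) = χ(s) + ∑_c f(s∖c)` and the induction hypothesis `(n-1) f(s∖c) = 2 d(s∖c) (∑ cr - cr(c))`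
yields `n f(s) = 2 d(s) ∑ cr`.
-/

namespace TraceJM

theorem sum_sum_erase_eq_zero {α M : Type*} [DecidableEq α] [AddCommMonoid M] {A : Finset α}
    {F : α → α → M} (hF : ∀ a ∈ A, ∀ b ∈ A, a ≠ b → F a b + F b a = 0) :
    ∑ a ∈ A, ∑ b ∈ A.erase a, F a b = 0 := by
  rw [← sum_finset_product' A.offDiag A (fun a => A.erase a) (by simp [and_comm, ne_comm])]
  refine sum_involution (fun p _ => p.swap) (fun p hp => ?_) (fun p hp _ => ?_)
    (fun p hp => ?_) (fun p _ => p.swap_swap)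
  all_goals obtain ⟨ha, hb, hab⟩ := mem_offDiag.1 hp
  · exact hF _ ha _ hb hab
  · exact fun h => hab (congrArg Prod.fst h).symm
  · exact mem_offDiag.2 ⟨hb, ha, Ne.symm hab⟩

theorem covBy_iff_add_one {x c : ℕ × ℕ} : x ⋖ c ↔ (x.1 + 1, x.2) = c ∨ (x.1, x.2 + 1) = c := by
  obtain ⟨a, b⟩ := x
  obtain ⟨a', b'⟩ := c
  simp only [Prod.mk_covBy_mk_iff, Order.covBy_iff_add_one_eq, Prod.mk.injEq]
  tauto

theorem boxContent_add_boxContent_of_covBy {x y c : ℕ × ℕ} (hx : x ⋖ c) (hy : y ⋖ c)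
    (hxy : x ≠ y) : boxContent x + boxContent y = 2 * boxContent c := by
  rw [covBy_iff_add_one] at hx hy
  simp only [Ne, Prod.ext_iff, boxContent] at *
  omega

theorem boxContent_add_boxContent_of_covBy' {x y c : ℕ × ℕ} (hx : y ⋖ x) (hc : y ⋖ c)
    (hxc : x ≠ c) : boxContent x + boxContent c = 2 * boxContent y := by
  rw [covBy_iff_add_one] at hx hc
  simp only [Ne, Prod.ext_iff, boxContent] at *
  omega

variable {s : Finset (ℕ × ℕ)} {c x y : ℕ × ℕ}

theorem mem_corners : c ∈ corners s ↔ c ∈ s ∧ (c.1 + 1, c.2) ∉ s ∧ (c.1, c.2 + 1) ∉ s :=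
  mem_filter

theorem mem_of_mem_corners (h : c ∈ corners s) : c ∈ s := (mem_corners.1 h).1

theorem dimSYT_eq_sum_corners (h : s.Nonempty) :
    dimSYT s = ∑ c ∈ corners s, dimSYT (s.erase c) := by
  rw [dimSYT, dif_neg h.ne_empty, sum_attach (corners s) fun c => dimSYT (s.erase c)]

theorem isLowerSet_erase_of_mem_corners (hs : IsLowerSet (s : Set (ℕ × ℕ)))
    (hc : c ∈ corners s) : IsLowerSet ((s.erase c : Finset (ℕ × ℕ)) : Set (ℕ × ℕ)) := by
  obtain ⟨-, hdown, hright⟩ := mem_corners.1 hc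
  intro b a hab hb
  simp only [mem_coe, mem_erase] at hb ⊢
  refine ⟨?_, hs hab hb.2⟩
  rintro rfl
  obtain ⟨h1, h2⟩ := Prod.mk_le_mk.1 hab
  rcases h1.lt_or_eq with h1 | h1
  · exact hdown (hs (Prod.mk_le_mk.2 ⟨h1, h2⟩) hb.2)
  · rcases h2.lt_or_eq with h2 | h2
    · exact hright (hs (Prod.mk_le_mk.2 ⟨h1.le, h2⟩) hb.2)
    · exact hb.1 (Prod.ext h1 h2).symm

theorem erase_corners_subset_corners_erase : (corners s).erase c ⊆ corners (s.erase c) := by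
  intro x hx
  obtain ⟨hxc, hx⟩ := mem_erase.1 hx
  obtain ⟨hxs, hdown, hright⟩ := mem_corners.1 hx
  exact mem_corners.2 ⟨mem_erase.2 ⟨hxc, hxs⟩, fun h => hdown (mem_of_mem_erase h),
    fun h => hright (mem_of_mem_erase h)⟩

def newCorners (s : Finset (ℕ × ℕ)) (c : ℕ × ℕ) : Finset (ℕ × ℕ) :=
  corners (s.erase c) \ corners s

theorem corners_erase_eq_union : corners (s.erase c) = (corners s).erase c ∪ newCorners s c := by
  ext x
  have hsub := @erase_corners_subset_corners_erase s c x
  by_cases hx : x ∈ corners s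
  · have hxc : x ∈ corners (s.erase c) ↔ x ≠ c := by
      refine ⟨fun h => (mem_erase.1 (mem_of_mem_corners h)).1, fun h => hsub (mem_erase.2 ⟨h, hx⟩)⟩
    simp [newCorners, hx, hxc]
  · simp [newCorners, hx]

theorem covBy_of_mem_newCorners (hx : x ∈ newCorners s c) : x ⋖ c := by
  obtain ⟨hx, hxs⟩ := mem_sdiff.1 hx
  obtain ⟨hxs', hdown, hright⟩ := mem_corners.1 hx
  rw [mem_corners] at hxs
  rw [covBy_iff_add_one]
  by_contra! h
  exact hxs ⟨mem_of_mem_erase hxs', fun hd => hdown (mem_erase.2 ⟨h.1, hd⟩),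
    fun hr => hright (mem_erase.2 ⟨h.2, hr⟩)⟩

theorem notMem_corners_of_mem_newCorners (hx : x ∈ newCorners s c) : x ∉ corners s :=
  (mem_sdiff.1 hx).2

theorem sum_corners_erase {M : Type*} [AddCommMonoid M] (g : ℕ × ℕ → M) :
    ∑ x ∈ corners (s.erase c), g x =
      ∑ x ∈ (corners s).erase c, g x + ∑ x ∈ newCorners s c, g x := by
  rw [corners_erase_eq_union, sum_union]
  exact disjoint_left.2 fun x hx hx' =>
    notMem_corners_of_mem_newCorners hx' (mem_of_mem_erase hx)

theorem sum_corners_erase_erase {M : Type*} [AddCommMonoid M] (hx : x ∈ newCorners s c)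
    (g : ℕ × ℕ → M) :
    ∑ y ∈ corners ((s.erase c).erase x), g y =
      ∑ y ∈ (corners s).erase c, g y + ∑ y ∈ (newCorners s c).erase x, g y +
        ∑ y ∈ newCorners (s.erase c) x, g y := by
  have hx' : x ∉ (corners s).erase c := fun h =>
    notMem_corners_of_mem_newCorners hx (mem_of_mem_erase h)
  rw [sum_corners_erase, corners_erase_eq_union, erase_union_distrib, erase_eq_of_notMem hx',
    sum_union]
  exact disjoint_left.2 fun y hy hy' =>
    notMem_corners_of_mem_newCorners (mem_of_mem_erase hy') (mem_of_mem_erase hy)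

theorem newCorners_subset_newCorners_erase (hc : c ∈ corners s) (hxc : x ≠ c) :
    newCorners s x ⊆ newCorners (s.erase c) x := by
  intro y hy
  obtain ⟨hy, hys⟩ := mem_sdiff.1 hy
  obtain ⟨hyx, hys'⟩ := mem_erase.1 (mem_of_mem_corners hy)
  have hyc : y ≠ c := fun h => hys (h ▸ hc)
  refine mem_sdiff.2 ⟨?_, fun hy' => ?_⟩
  · rw [erase_right_comm]
    exact erase_corners_subset_corners_erase (mem_erase.2 ⟨hyc, hy⟩)
  · -- the cell that keeps `y` from being a corner of `s` would have to be both `x` and `c`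
    simp only [mem_corners, mem_erase, not_and_or, not_not] at hy hy' hys
    grind

theorem mem_newCorners_erase_sdiff :
    y ∈ newCorners (s.erase c) x \ newCorners s x ↔
      y ∈ corners ((s.erase c).erase x) ∧ y ∉ corners (s.erase c) ∧ y ∉ corners (s.erase x) := by
  simp only [newCorners, mem_sdiff, not_and, not_not]
  constructor
  · rintro ⟨⟨h, hc⟩, hx⟩
    refine ⟨h, hc, fun hx' => hc ?_⟩
    have hyc : y ≠ c := (mem_erase.1 (mem_erase.1 (mem_of_mem_corners h)).2).1
    exact erase_corners_subset_corners_erase (mem_erase.2 ⟨hyc, hx hx'⟩)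
  · rintro ⟨h, hc, hx⟩
    exact ⟨⟨h, hc⟩, fun h' => absurd h' hx⟩

theorem newCorners_erase_sdiff_comm :
    newCorners (s.erase c) x \ newCorners s x = newCorners (s.erase x) c \ newCorners s c := by
  ext y
  rw [mem_newCorners_erase_sdiff, mem_newCorners_erase_sdiff, erase_right_comm]
  tauto

theorem boxContent_sub_eq_of_mem_newCorners (hs : IsLowerSet (s : Set (ℕ × ℕ))) (hc : c ∈ s)
    (hx : x ∈ newCorners s c) (hy : y ∈ newCorners (s.erase c) x) :
    boxContent c - boxContent x = boxContent x - boxContent y := by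
  have hcx := covBy_iff_add_one.1 (covBy_of_mem_newCorners hx)
  have hxy := covBy_iff_add_one.1 (covBy_of_mem_newCorners hy)
  obtain ⟨-, hdown, hright⟩ := mem_corners.1 (mem_sdiff.1 hy).1
  simp only [mem_erase, not_and_or, not_not, Ne] at hdown hright
  have hd : (y.1 + 1, y.2) ≤ c → (y.1 + 1, y.2) ∈ s := fun h => hs h hc
  have hr : (y.1, y.2 + 1) ≤ c → (y.1, y.2 + 1) ∈ s := fun h => hs h hc
  -- a left step followed by an up step (or vice versa) would leave a cell of
  -- `(s.erase c).erase x` below or to the right of `y`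
  rcases hcx with rfl | rfl <;> rcases hxy with rfl | rfl <;>
    simp_all [boxContent, Prod.ext_iff]

def jmTrace (s : Finset (ℕ × ℕ)) : ℤ :=
  ∑ c ∈ corners s, (dimSYT (s.erase c) : ℤ) * boxContent c

def transpositionTrace (s : Finset (ℕ × ℕ)) : ℤ :=
  ∑ c ∈ corners s, ∑ x ∈ newCorners s c,
    (dimSYT ((s.erase c).erase x) : ℤ) * (boxContent c - boxContent x)

theorem jmTrace_eq_transpositionTrace_add (h : 2 ≤ s.card) :
    jmTrace s = transpositionTrace s + ∑ c ∈ corners s, jmTrace (s.erase c) := by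
  have hbranch (c : ℕ × ℕ) :
      (dimSYT (s.erase c) : ℤ) * boxContent c - jmTrace (s.erase c) =
        ∑ x ∈ corners (s.erase c), (dimSYT ((s.erase c).erase x) : ℤ) *
          (boxContent c - boxContent x) := by
    rw [dimSYT_eq_sum_corners (one_lt_card_iff_nontrivial.1 h).erase_nonempty, jmTrace,
      Nat.cast_sum, sum_mul, ← sum_sub_distrib]
    exact sum_congr rfl fun x _ => by ring
  have hcancel : ∑ c ∈ corners s, ∑ x ∈ (corners s).erase c,
      (dimSYT ((s.erase c).erase x) : ℤ) * (boxContent c - boxContent x) = 0 :=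
    sum_sum_erase_eq_zero fun c _ x _ _ => by rw [erase_right_comm]; ring
  suffices jmTrace s - ∑ c ∈ corners s, jmTrace (s.erase c) = transpositionTrace s by linarith
  rw [jmTrace, ← sum_sub_distrib, sum_congr rfl fun c _ => hbranch c]
  simp only [sum_corners_erase]
  rw [sum_add_distrib, hcancel, zero_add, transpositionTrace]

theorem sum_newCorners_sum_erase_eq_zero (c : ℕ × ℕ) :
    ∑ x ∈ newCorners s c, ∑ y ∈ (newCorners s c).erase x,
      (dimSYT (((s.erase c).erase x).erase y) : ℤ) * (boxContent c - boxContent x) = 0 :=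
  sum_sum_erase_eq_zero fun x hx y hy hxy => by
    have := boxContent_add_boxContent_of_covBy (covBy_of_mem_newCorners hx)
      (covBy_of_mem_newCorners hy) hxy
    rw [erase_right_comm (s := s.erase c) (a := y)]
    linear_combination (-(dimSYT (((s.erase c).erase x).erase y) : ℤ)) * this

theorem sum_corners_sum_newCorners_erase_sdiff_eq_zero :
    ∑ c ∈ corners s, ∑ x ∈ (corners s).erase c, ∑ y ∈ newCorners (s.erase c) x \ newCorners s x,
      (dimSYT (((s.erase c).erase x).erase y) : ℤ) * (boxContent x - boxContent y) = 0 :=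
  sum_sum_erase_eq_zero fun c _ x _ hcx => by
    rw [← newCorners_erase_sdiff_comm, ← sum_add_distrib]
    refine sum_eq_zero fun y hy => ?_
    have hyx := covBy_of_mem_newCorners (mem_sdiff.1 hy).1
    rw [newCorners_erase_sdiff_comm] at hy
    have := boxContent_add_boxContent_of_covBy' hyx (covBy_of_mem_newCorners (mem_sdiff.1 hy).1) hcx
    rw [erase_right_comm (s := s) (a := x)]
    linear_combination (dimSYT (((s.erase c).erase x).erase y) : ℤ) * this

theorem sum_corners_sum_newCorners_comm :
    ∑ c ∈ corners s, ∑ x ∈ newCorners s c, ∑ y ∈ (corners s).erase c,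
      (dimSYT (((s.erase c).erase x).erase y) : ℤ) * (boxContent c - boxContent x) =
    ∑ c ∈ corners s, ∑ x ∈ (corners s).erase c, ∑ y ∈ newCorners s x,
      (dimSYT (((s.erase c).erase x).erase y) : ℤ) * (boxContent x - boxContent y) := by
  rw [eq_comm, sum_comm' (t' := corners s) (s' := fun x => (corners s).erase x)
    (fun c x => by simp only [mem_erase]; tauto)]
  refine sum_congr rfl fun c _ => ?_
  rw [sum_comm]
  refine sum_congr rfl fun x _ => sum_congr rfl fun y _ => ?_
  rw [erase_right_comm (s := s) (a := y), erase_right_comm (s := s.erase c) (a := y)]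

theorem transpositionTrace_eq_sum_erase (hs : IsLowerSet (s : Set (ℕ × ℕ))) (h : 3 ≤ s.card) :
    transpositionTrace s = ∑ c ∈ corners s, transpositionTrace (s.erase c) := by
  have hL : transpositionTrace s =
      ∑ c ∈ corners s, ∑ x ∈ newCorners s c, ∑ y ∈ (corners s).erase c,
        (dimSYT (((s.erase c).erase x).erase y) : ℤ) * (boxContent c - boxContent x) +
      ∑ c ∈ corners s, ∑ x ∈ newCorners s c, ∑ y ∈ (newCorners s c).erase x,
        (dimSYT (((s.erase c).erase x).erase y) : ℤ) * (boxContent c - boxContent x) +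
      ∑ c ∈ corners s, ∑ x ∈ newCorners s c, ∑ y ∈ newCorners (s.erase c) x,
        (dimSYT (((s.erase c).erase x).erase y) : ℤ) * (boxContent x - boxContent y) := by
    simp only [← sum_add_distrib]
    refine sum_congr rfl fun c hc => sum_congr rfl fun x hx => ?_
    have hne : ((s.erase c).erase x).Nonempty := by
      rw [← card_pos, card_erase_of_mem (mem_of_mem_corners (mem_sdiff.1 hx).1),
        card_erase_of_mem (mem_of_mem_corners hc)]
      omega
    rw [dimSYT_eq_sum_corners hne, Nat.cast_sum, sum_corners_erase_erase hx, add_mul, add_mul,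
      sum_mul, sum_mul, sum_mul]
    congr 1
    exact sum_congr rfl fun y hy => by
      rw [boxContent_sub_eq_of_mem_newCorners hs (mem_of_mem_corners hc) hx hy]
  have hR : ∑ c ∈ corners s, transpositionTrace (s.erase c) =
      ∑ c ∈ corners s, ∑ x ∈ (corners s).erase c, ∑ y ∈ newCorners s x,
        (dimSYT (((s.erase c).erase x).erase y) : ℤ) * (boxContent x - boxContent y) +
      ∑ c ∈ corners s, ∑ x ∈ (corners s).erase c, ∑ y ∈ newCorners (s.erase c) x \ newCorners s x,
        (dimSYT (((s.erase c).erase x).erase y) : ℤ) * (boxContent x - boxContent y) +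
      ∑ c ∈ corners s, ∑ x ∈ newCorners s c, ∑ y ∈ newCorners (s.erase c) x,
        (dimSYT (((s.erase c).erase x).erase y) : ℤ) * (boxContent x - boxContent y) := by
    simp only [← sum_add_distrib]
    refine sum_congr rfl fun c hc => ?_
    rw [transpositionTrace, sum_corners_erase]
    congr 1
    refine sum_congr rfl fun x hx => ?_
    rw [← sum_sdiff (newCorners_subset_newCorners_erase hc (ne_of_mem_erase hx)), add_comm]
  rw [hL, hR, sum_corners_sum_newCorners_comm, sum_corners_sum_newCorners_erase_sdiff_eq_zero,
    sum_eq_zero fun c _ => sum_newCorners_sum_erase_eq_zero c]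

theorem eq_singleton_of_card_eq_one (hs : IsLowerSet (s : Set (ℕ × ℕ))) (h : s.card = 1) :
    s = {(0, 0)} := by
  obtain ⟨a, rfl⟩ := card_eq_one.1 h
  have : ((0, 0) : ℕ × ℕ) ∈ ({a} : Finset (ℕ × ℕ)) :=
    hs (Prod.mk_le_mk.2 ⟨Nat.zero_le _, Nat.zero_le _⟩) (mem_singleton_self a)
  rw [mem_singleton.1 this]

theorem jmTrace_eq_zero_of_card_eq_one (hs : IsLowerSet (s : Set (ℕ × ℕ))) (h : s.card = 1) :
    jmTrace s = 0 := by
  refine sum_eq_zero fun c hc => ?_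
  have hcs := mem_of_mem_corners hc
  rw [eq_singleton_of_card_eq_one hs h, mem_singleton] at hcs
  simp [hcs, boxContent]

theorem jmTrace_eq_mul_transpositionTrace (hs : IsLowerSet (s : Set (ℕ × ℕ)))
    (hne : s.Nonempty) : jmTrace s = (s.card - 1 : ℤ) * transpositionTrace s := by
  induction s using Finset.strongInduction with | H s ih =>
  obtain h1 | h2 : s.card = 1 ∨ 2 ≤ s.card := by have := hne.card_pos; omega
  · rw [jmTrace_eq_zero_of_card_eq_one hs h1, h1]
    ring
  have hrec : ∀ c ∈ corners s,
      jmTrace (s.erase c) = (s.card - 2 : ℤ) * transpositionTrace (s.erase c) := by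
    intro c hc
    have hcs := mem_of_mem_corners hc
    rw [ih _ (erase_ssubset hcs) (isLowerSet_erase_of_mem_corners hs hc)
      ((one_lt_card_iff_nontrivial.1 h2).erase_nonempty), card_erase_of_mem hcs,
      Nat.cast_sub (by omega)]
    ring
  rw [jmTrace_eq_transpositionTrace_add h2, sum_congr rfl hrec, ← mul_sum]
  obtain h2 | h3 : s.card = 2 ∨ 3 ≤ s.card := by omega
  · rw [h2]
    ring
  · rw [← transpositionTrace_eq_sum_erase hs h3]
    ring

theorem card_mul_jmTrace (hs : IsLowerSet (s : Set (ℕ × ℕ))) (hne : s.Nonempty) :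
    (s.card : ℤ) * jmTrace s = 2 * dimSYT s * ∑ c ∈ s, boxContent c := by
  induction s using Finset.strongInduction with | H s ih =>
  obtain h1 | h2 : s.card = 1 ∨ 2 ≤ s.card := by have := hne.card_pos; omega
  · rw [jmTrace_eq_zero_of_card_eq_one hs h1, eq_singleton_of_card_eq_one hs h1]
    simp [boxContent]
  have hrec : ∀ c ∈ corners s, (s.card - 1 : ℤ) * jmTrace (s.erase c) =
      2 * dimSYT (s.erase c) * (∑ x ∈ s, boxContent x - boxContent c) := by
    intro c hc
    have hcs := mem_of_mem_corners hc
    rw [← sum_erase_eq_sub hcs, ← ih _ (erase_ssubset hcs) (isLowerSet_erase_of_mem_corners hs hc)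
      ((one_lt_card_iff_nontrivial.1 h2).erase_nonempty), card_erase_of_mem hcs,
      Nat.cast_sub (by omega), Nat.cast_one]
  have hsum : (s.card - 1 : ℤ) * ∑ c ∈ corners s, jmTrace (s.erase c) =
      2 * dimSYT s * ∑ c ∈ s, boxContent c - 2 * jmTrace s := by
    rw [mul_sum, sum_congr rfl hrec, dimSYT_eq_sum_corners hne, jmTrace]
    generalize ∑ x ∈ s, boxContent x = C
    push_cast
    simp only [mul_sum, sum_mul, ← sum_sub_distrib]
    exact sum_congr rfl fun c _ => by ring
  linear_combination (s.card - 1 : ℤ) * jmTrace_eq_transpositionTrace_add h2 + hsum -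
    jmTrace_eq_mul_transpositionTrace hs hne

end TraceJM

/-- `|ν| · ∑_{λ ∈ ν∖1} (dim λ) · cr(□_{ν/λ}) = 2 · (dim ν) · ∑_{□∈ν} cr(□)`. -/
theorem trace_JM_identity (ν : YoungDiagram) (h : ν.cells.Nonempty) :
    (ν.cells.card : ℤ) *
        ∑ c ∈ corners ν.cells, (dimSYT (ν.cells.erase c) : ℤ) * boxContent c
      = 2 * (dimSYT ν.cells : ℤ) * ∑ c ∈ ν.cells, boxContent c :=
  TraceJM.card_mul_jmTrace ν.isLowerSet h
end

section
/- For any partition ν of n, the coefficient of w³ in the power series expansion (around w = 0) of g_ν(n/2 + 1 + 1/w)/g_ν(n/2 + 1/w) equals 2∑_{□∈ν} cr(□) + n³/4, where g_ν(x) = ∏_{i=1}^{n}(x + ν_i − i) and cr denotes box contents. -/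
/-!
Each factor `(1 + (d + 1) w) / (1 + d w)` equals `1 + w / (1 + d w) = 1 + w - d w² + d² w³ - ⋯`,
so the `w³`-coefficient of a product of `n` such factors is `C(n,3) - (n - 1) ∑ dᵢ + ∑ dᵢ²`.
For `dᵢ = n/2 + νᵢ - (i + 1)` the first sum is `n/2`, and since the contents of row `i` add up
to `νᵢ(νᵢ - 1)/2 - i νᵢ`, the second is `2 ∑ cr(□)` plus a polynomial in `n`.
-/

open Finset PowerSeries

theorem Nat.two_mul_cast_choose_two {R : Type*} [CommRing R] (n : ℕ) :
    2 * (n.choose 2 : R) = n * (n - 1) := by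
  induction n with
  | zero => simp
  | succ n ih =>
    rw [Nat.choose_succ_succ', Nat.choose_one_right, Nat.cast_add, mul_add, ih]
    push_cast; ring

theorem Nat.six_mul_cast_choose_three {R : Type*} [CommRing R] (n : ℕ) :
    6 * (n.choose 3 : R) = n * (n - 1) * (n - 2) := by
  induction n with
  | zero => simp
  | succ n ih =>
    rw [Nat.choose_succ_succ', Nat.cast_add, mul_add, ih,
      show (6 : R) = 3 * 2 by norm_num, mul_assoc, Nat.two_mul_cast_choose_two]
    push_cast; ring

section StaircaseSums

variable {R : Type*} [CommRing R]

theorem two_mul_sum_range_sub (r i : ℕ) :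
    2 * ∑ j ∈ range r, ((j : R) - i) = (r : R) ^ 2 - r - 2 * i * r := by
  induction r with
  | zero => simp
  | succ r ih => rw [sum_range_succ, mul_add, ih]; push_cast; ring

theorem two_mul_sum_range_sub_succ (a : R) (N : ℕ) :
    2 * ∑ i ∈ range N, (a - (i + 1)) = 2 * N * a - N * (N + 1) := by
  induction N with
  | zero => simp
  | succ N ih => rw [sum_range_succ, mul_add, ih]; push_cast; ring

theorem six_mul_sum_range_sub_succ_sq (a : R) (N : ℕ) :
    6 * ∑ i ∈ range N, (a - (i + 1)) ^ 2 =
      6 * N * a ^ 2 - 6 * a * N * (N + 1) + N * (N + 1) * (2 * N + 1) := by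
  induction N with
  | zero => simp
  | succ N ih => rw [sum_range_succ, mul_add, ih]; push_cast; ring

end StaircaseSums

namespace PowerSeries

variable {k : Type*} [Field k]

theorem prod_inv_distrib {ι : Type*} (s : Finset ι) (f : ι → k⟦X⟧) :
    (∏ i ∈ s, f i)⁻¹ = ∏ i ∈ s, (f i)⁻¹ := by
  induction s using Finset.cons_induction with
  | empty => simp
  | cons a s _ ih => rw [prod_cons, prod_cons, PowerSeries.mul_inv_rev, ih, mul_comm]

theorem one_add_C_add_one_mul_X_mul_inv (d : k) :
    (1 + C (d + 1) * X) * (1 + C d * X)⁻¹ = 1 + X * (1 + C d * X)⁻¹ := by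
  rw [eq_comm, eq_mul_inv_iff_mul_eq (by simp), add_mul, one_mul, mul_assoc,
    PowerSeries.inv_mul_cancel _ (by simp), map_add, map_one]
  ring

theorem coeff_zero_inv_one_add_C_mul_X_mul (d : k) (φ : k⟦X⟧) :
    coeff 0 ((1 + C d * X)⁻¹ * φ) = coeff 0 φ := by
  simp [constantCoeff_inv]

theorem coeff_succ_inv_one_add_C_mul_X_mul (d : k) (φ : k⟦X⟧) (m : ℕ) :
    coeff (m + 1) ((1 + C d * X)⁻¹ * φ) =
      coeff (m + 1) φ - d * coeff m ((1 + C d * X)⁻¹ * φ) := by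
  have h : (1 + C d * X) * ((1 + C d * X)⁻¹ * φ) = φ := by
    rw [← mul_assoc, PowerSeries.mul_inv_cancel _ (by simp), one_mul]
  have := congrArg (coeff (m + 1)) h
  rw [add_mul, one_mul, mul_assoc, map_add, coeff_C_mul, coeff_succ_X_mul] at this
  linear_combination this

theorem coeff_succ_one_add_X_mul (ψ φ : k⟦X⟧) (m : ℕ) :
    coeff (m + 1) ((1 + X * ψ) * φ) = coeff (m + 1) φ + coeff m (ψ * φ) := by
  rw [add_mul, one_mul, mul_assoc, map_add, coeff_succ_X_mul]

section ShiftedProduct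

variable {ι : Type*} (s : Finset ι) (d : ι → k)

theorem constantCoeff_prod_one_add_X_mul_inv :
    constantCoeff (∏ i ∈ s, (1 + X * (1 + C (d i) * X)⁻¹) : k⟦X⟧) = 1 := by
  simp [map_prod]

theorem coeff_one_prod_one_add_X_mul_inv :
    coeff 1 (∏ i ∈ s, (1 + X * (1 + C (d i) * X)⁻¹)) = (#s : k) := by
  induction s using Finset.cons_induction with
  | empty => simp
  | cons a s _ ih =>
    rw [prod_cons]
    refine (coeff_succ_one_add_X_mul _ _ 0).trans ?_
    rw [ih, coeff_zero_inv_one_add_C_mul_X_mul, coeff_zero_eq_constantCoeff_apply,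
      constantCoeff_prod_one_add_X_mul_inv, card_cons]
    push_cast; ring

theorem coeff_two_prod_one_add_X_mul_inv :
    coeff 2 (∏ i ∈ s, (1 + X * (1 + C (d i) * X)⁻¹)) = ((#s).choose 2 : k) - ∑ i ∈ s, d i := by
  induction s using Finset.cons_induction with
  | empty => simp
  | cons a s _ ih =>
    rw [prod_cons, coeff_succ_one_add_X_mul, ih, coeff_succ_inv_one_add_C_mul_X_mul,
      coeff_zero_inv_one_add_C_mul_X_mul, coeff_one_prod_one_add_X_mul_inv,
      coeff_zero_eq_constantCoeff_apply, constantCoeff_prod_one_add_X_mul_inv, card_cons,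
      sum_cons, Nat.choose_succ_succ', Nat.choose_one_right]
    push_cast; ring

theorem coeff_three_prod_one_add_X_mul_inv :
    coeff 3 (∏ i ∈ s, (1 + X * (1 + C (d i) * X)⁻¹)) =
      ((#s).choose 3 : k) - ((#s : k) - 1) * ∑ i ∈ s, d i + ∑ i ∈ s, d i ^ 2 := by
  induction s using Finset.cons_induction with
  | empty => simp
  | cons a s _ ih =>
    rw [prod_cons, coeff_succ_one_add_X_mul, ih, coeff_succ_inv_one_add_C_mul_X_mul,
      coeff_succ_inv_one_add_C_mul_X_mul, coeff_zero_inv_one_add_C_mul_X_mul,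
      coeff_two_prod_one_add_X_mul_inv, coeff_one_prod_one_add_X_mul_inv,
      coeff_zero_eq_constantCoeff_apply, constantCoeff_prod_one_add_X_mul_inv, card_cons,
      sum_cons, sum_cons, Nat.choose_succ_succ' _ 2]
    push_cast; ring

end ShiftedProduct

end PowerSeries

namespace YoungDiagram

variable {R : Type*} [CommRing R] (μ : YoungDiagram) {N : ℕ}

theorem colLen_zero_le_card_cells : μ.colLen 0 ≤ #μ.cells := by
  rw [colLen_eq_card]
  exact card_le_card (filter_subset _ _)

theorem sum_cells_eq_sum_rows {M : Type*} [AddCommMonoid M] (hN : μ.colLen 0 ≤ N) (f : ℕ × ℕ → M) :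
    ∑ c ∈ μ.cells, f c = ∑ i ∈ range N, ∑ j ∈ range (μ.rowLen i), f (i, j) := by
  have hrow : ∀ c ∈ μ.cells, c.1 ∈ range N := fun c hc =>
    mem_range.2 <| (mem_iff_lt_colLen.1 ((mem_cells c).1 hc)).trans_le
      ((μ.colLen_anti 0 c.2 (Nat.zero_le _)).trans hN)
  rw [← sum_fiberwise_of_maps_to hrow]
  refine sum_congr rfl fun i _ => ?_
  rw [show μ.cells.filter (·.1 = i) = μ.row i from rfl, row_eq_prod, sum_product,
    sum_singleton]

theorem sum_rowLen (hN : μ.colLen 0 ≤ N) : ∑ i ∈ range N, (μ.rowLen i : R) = #μ.cells := by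
  rw [card_eq_sum_ones, μ.sum_cells_eq_sum_rows hN]
  simp

theorem two_mul_sum_boxContent (hN : μ.colLen 0 ≤ N) :
    2 * ∑ c ∈ μ.cells, (boxContent c : R) =
      ∑ i ∈ range N, ((μ.rowLen i : R) ^ 2 - μ.rowLen i - 2 * i * μ.rowLen i) := by
  rw [μ.sum_cells_eq_sum_rows hN, mul_sum]
  refine sum_congr rfl fun i _ => ?_
  simp only [boxContent, Int.cast_sub, Int.cast_natCast]
  exact two_mul_sum_range_sub _ _

theorem sum_add_rowLen_sub_succ (hN : μ.colLen 0 ≤ N) (a : R) :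
    ∑ i ∈ range N, (a + μ.rowLen i - (i + 1)) = #μ.cells + ∑ i ∈ range N, (a - (i + 1)) := by
  rw [← μ.sum_rowLen hN, ← sum_add_distrib]
  exact sum_congr rfl fun i _ => by ring

theorem sum_add_rowLen_sub_succ_sq (hN : μ.colLen 0 ≤ N) (a : R) :
    ∑ i ∈ range N, (a + μ.rowLen i - (i + 1)) ^ 2 =
      2 * ∑ c ∈ μ.cells, (boxContent c : R) + (2 * a - 1) * #μ.cells +
        ∑ i ∈ range N, (a - (i + 1)) ^ 2 := by
  rw [μ.two_mul_sum_boxContent hN, ← μ.sum_rowLen hN, mul_sum, ← sum_add_distrib,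
    ← sum_add_distrib]
  exact sum_congr rfl fun i _ => by ring

end YoungDiagram

/-- For a partition ν of n, substituting `x = n/2 + 1/w` into
`g_ν(x+1)/g_ν(x)` (with `g_ν(x) = ∏_{i=1}^{n}(x + ν_i − i)`, so that the ratio
becomes the power series
`∏_{i=1}^{n}(1 + w(n/2 + 1 + ν_i − i)) · (∏_{i=1}^{n}(1 + w(n/2 + ν_i − i)))⁻¹`),
the coefficient of `w³` equals `2∑_{□∈ν} cr(□) + n³/4`. -/
theorem g_shift_ratio_w3_coeff (ν : YoungDiagram) :
    PowerSeries.coeff (R := ℚ) 3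
      ((∏ i ∈ range ν.cells.card,
          (1 + PowerSeries.C (R := ℚ) ((ν.cells.card : ℚ) / 2 + 1 + (ν.rowLen i : ℚ)
              - ((i : ℚ) + 1)) * PowerSeries.X)) *
        (∏ i ∈ range ν.cells.card,
          (1 + PowerSeries.C (R := ℚ) ((ν.cells.card : ℚ) / 2 + (ν.rowLen i : ℚ)
              - ((i : ℚ) + 1)) * PowerSeries.X))⁻¹)
      = 2 * (∑ c ∈ ν.cells, (boxContent c : ℚ)) + (ν.cells.card : ℚ) ^ 3 / 4 := by
  set n := #ν.cells
  have hn := ν.colLen_zero_le_card_cells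
  have hfactor : ∀ i ∈ range n,
      (1 + C ((n : ℚ) / 2 + 1 + ν.rowLen i - (i + 1)) * X) *
          (1 + C ((n : ℚ) / 2 + ν.rowLen i - (i + 1)) * X)⁻¹ =
        1 + X * (1 + C ((n : ℚ) / 2 + ν.rowLen i - (i + 1)) * X)⁻¹ := fun i _ => by
    rw [← one_add_C_add_one_mul_X_mul_inv]
    ring_nf
  rw [PowerSeries.prod_inv_distrib, ← prod_mul_distrib, prod_congr rfl hfactor,
    coeff_three_prod_one_add_X_mul_inv, card_range, ν.sum_add_rowLen_sub_succ hn,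
    ν.sum_add_rowLen_sub_succ_sq hn]
  linear_combination (1 / 6 : ℚ) * Nat.six_mul_cast_choose_three (R := ℚ) n
    - ((n : ℚ) - 1) / 2 * two_mul_sum_range_sub_succ ((n : ℚ) / 2) n
    + (1 / 6 : ℚ) * six_mul_sum_range_sub_succ_sq ((n : ℚ) / 2) n
end
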